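/- If c ∈ S and int(cl([{c}])) ≠ ∅, then int(cl([{c}])) is a minimal element of cofInv(f) and contains c. -/

import Mathlib

open Set Topology Function

variable {X : Type*}

/-- `A` is mod-f-invariant: `g(A \ S) ⊆ A`. -/
def ModInv (g : X → X) (S A : Set X) : Prop := g '' (A \ S) ⊆ A

/-- `A` is fully mod-f-invariant: both `A` and its complement are mod-f-invariant. -/
def FullInv (g : X → X) (S A : Set X) : Prop := ModInv g S A ∧ ModInv g S Aᶜ

/-- The least fully mod-f-invariant set containing `A`. -/
def fullHull (g : X → X) (S A : Set X) : Set X := ⋂₀ {B | FullInv g S B ∧ A ⊆ B}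

/-- The least mod-f-invariant set containing `A`. -/
def modHull (g : X → X) (S A : Set X) : Set X := ⋂₀ {B | ModInv g S B ∧ A ⊆ B}

/-- `R(A)`: points whose orbit reaches `A` before hitting `S`. -/
def Reach (g : X → X) (S A : Set X) : Set X :=
  {x | ∃ n : ℕ, (∀ k < n, g^[k] x ∉ S) ∧ g^[n] x ∈ A}

variable [TopologicalSpace X]

/-- A set is regular open if it equals the interior of its closure. -/
def RegOpen (O : Set X) : Prop := O = interior (closure O)

/-- `cofInv f`: the nonempty regular open fully mod-f-invariant sets. -/
def CofInv (g : X → X) (S : Set X) : Set (Set X) :=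
  {D | D.Nonempty ∧ RegOpen D ∧ FullInv g S D}

/-- A minimal element of `cofInv f`. -/
def MinCofInv (g : X → X) (S : Set X) (D : Set X) : Prop :=
  D ∈ CofInv g S ∧ ∀ E ∈ CofInv g S, E ⊆ D → E = D

/-- `coInv f`: the nonempty regular open mod-f-invariant sets. -/
def CoInv (g : X → X) (S : Set X) : Set (Set X) :=
  {U | U.Nonempty ∧ RegOpen U ∧ ModInv g S U}

/-- A transitive element of `coInv f`. -/
def TransElem (g : X → X) (S : Set X) (U : Set X) : Prop :=
  U ∈ CoInv g S ∧ ∀ V ∈ CoInv g S, V ⊆ U → V = U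

/-- A transitive cascade: a decreasing sequence of elements of `coInv f` that is
eventually inside every element of `coInv f` meeting its first term. -/
def IsCascade (g : X → X) (S : Set X) (γ : ℕ → Set X) : Prop :=
  Antitone γ ∧ (∀ n, γ n ∈ CoInv g S) ∧
    ∀ V ∈ CoInv g S, (V ∩ γ 0).Nonempty → ∃ m, γ m ⊆ V

/-- The core of a cascade. -/
def Core (γ : ℕ → Set X) : Set X := ⋂ n, closure (γ n)

/-- The domain of a cascade. -/
def Domain (g : X → X) (S : Set X) (γ : ℕ → Set X) : Set X :=
  interior (closure (⋃₀ {U | U ∈ CoInv g S ∧ γ 0 ⊆ U ∧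
    ∀ V ∈ CoInv g S, (V ∩ U).Nonempty → ∃ m, γ m ⊆ V}))

/-- `Germ x`: the intersection of the closures of the elements of `cofInv f` containing `x`. -/
def Germ (g : X → X) (S : Set X) (x : X) : Set X :=
  ⋂ D ∈ {D | D ∈ CofInv g S ∧ x ∈ D}, closure D

/-- `M(f)`: the union of all minimal elements of `cofInv f`. -/
def MinUnion (g : X → X) (S : Set X) : Set X := ⋃₀ {D | MinCofInv g S D}

/-- `N(f) = X \ cl(M(f))`. -/
def NonMin (g : X → X) (S : Set X) : Set X := (closure (MinUnion g S))ᶜ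

section Aux

variable {g : X → X} {S A : Set X}

lemma fullInv_compl' (h : FullInv g S A) : FullInv g S Aᶜ :=
  ⟨h.2, by simpa [ModInv, compl_compl] using h.1⟩

lemma modInv_closure' (hreg1 : ∀ O : Set X, IsOpen O → IsOpen (g ⁻¹' O \ S))
    (h : ModInv g S A) : ModInv g S (closure A) := by
  rintro _ ⟨x, ⟨hxcl, hxS⟩, rfl⟩
  by_contra hgx
  have hUopen : IsOpen (g ⁻¹' (closure A)ᶜ \ S) := hreg1 _ isClosed_closure.isOpen_compl
  have hxU : x ∈ g ⁻¹' (closure A)ᶜ \ S := ⟨hgx, hxS⟩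
  obtain ⟨z, hzU, hzA⟩ := mem_closure_iff.mp hxcl _ hUopen hxU
  exact hzU.1 (subset_closure (h ⟨z, ⟨hzA, hzU.2⟩, rfl⟩))

lemma fullInv_closure' (hreg1 : ∀ O : Set X, IsOpen O → IsOpen (g ⁻¹' O \ S))
    (hreg2 : ∀ O : Set X, IsOpen O → IsOpen (g '' (O \ S)))
    (h : FullInv g S A) : FullInv g S (closure A) := by
  refine ⟨modInv_closure' hreg1 h.1, ?_⟩
  have himg : IsOpen (g '' ((closure A)ᶜ \ S)) := hreg2 _ isClosed_closure.isOpen_compl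
  have hsub : g '' ((closure A)ᶜ \ S) ⊆ Aᶜ :=
    (image_mono (diff_subset_diff_left (compl_subset_compl.mpr subset_closure))).trans h.2
  intro y hy
  have : y ∈ interior Aᶜ := interior_maximal hsub himg hy
  rwa [interior_compl] at this

lemma fullInv_interior' (hreg1 : ∀ O : Set X, IsOpen O → IsOpen (g ⁻¹' O \ S))
    (hreg2 : ∀ O : Set X, IsOpen O → IsOpen (g '' (O \ S)))
    (h : FullInv g S A) : FullInv g S (interior A) := by
  have := fullInv_compl' (fullInv_closure' hreg1 hreg2 (fullInv_compl' h))
  rwa [closure_compl, compl_compl] at this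

lemma regOpen_int_cl' (A : Set X) : RegOpen (interior (closure A)) := by
  refine subset_antisymm (interior_maximal subset_closure isOpen_interior) ?_
  exact interior_mono (closure_minimal interior_subset isClosed_closure)

lemma fullInv_fullHull' : FullInv g S (fullHull g S A) := by
  constructor
  · rintro _ ⟨x, ⟨hx, hxS⟩, rfl⟩
    intro B hB
    exact hB.1.1 ⟨x, ⟨hx B hB, hxS⟩, rfl⟩
  · rintro _ ⟨x, ⟨hx, hxS⟩, rfl⟩
    simp only [fullHull, mem_compl_iff, mem_sInter, not_forall] at hx ⊢
    obtain ⟨B, hB, hxB⟩ := hx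
    exact ⟨B, hB, hB.1.2 ⟨x, ⟨hxB, hxS⟩, rfl⟩⟩

lemma subset_fullHull' : A ⊆ fullHull g S A :=
  fun _ hx => mem_sInter.mpr fun _ hB => hB.2 hx

lemma fullHull_min' {B : Set X} (hB : FullInv g S B) (hAB : A ⊆ B) :
    fullHull g S A ⊆ B := sInter_subset_of_mem ⟨hB, hAB⟩

end Aux

theorem stmt18 {X : Type*} [MetricSpace X] [CompleteSpace X]
    [TopologicalSpace.SeparableSpace X] [∀ x : X, (𝓝[≠] x).NeBot]
    (g : X → X) (S : Set X) (hScl : IsClosed S) (hSnd : IsNowhereDense S)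
    (hreg1 : ∀ O : Set X, IsOpen O → IsOpen (g ⁻¹' O \ S))
    (hreg2 : ∀ O : Set X, IsOpen O → IsOpen (g '' (O \ S))) (c : X) (hc : c ∈ S)
    (h : (interior (closure (fullHull g S {c}))).Nonempty) :
    MinCofInv g S (interior (closure (fullHull g S {c}))) ∧
      c ∈ interior (closure (fullHull g S {c})) := by
  set H : Set X := fullHull g S {c} with hHdef
  set D : Set X := interior (closure H) with hDdef
  have hHinv : FullInv g S H := fullInv_fullHull'
  have hDinv : FullInv g S D := fullInv_interior' hreg1 hreg2 (fullInv_closure' hreg1 hreg2 hHinv)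
  have hDreg : RegOpen D := regOpen_int_cl' H
  -- dichotomy: any fully invariant set either contains H or is disjoint from H
  have dicho : ∀ B : Set X, FullInv g S B → H ⊆ B ∨ H ⊆ Bᶜ := by
    intro B hB
    by_cases hcB : c ∈ B
    · exact Or.inl (fullHull_min' hB (singleton_subset_iff.mpr hcB))
    · exact Or.inr (fullHull_min' (fullInv_compl' hB) (singleton_subset_iff.mpr hcB))
  -- c ∈ D
  have hcD : c ∈ D := by
    by_contra hcD
    have hHDc : H ⊆ Dᶜ :=
      fullHull_min' (fullInv_compl' hDinv) (singleton_subset_iff.mpr hcD)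
    have hclHDc : closure H ⊆ Dᶜ := closure_minimal hHDc isOpen_interior.isClosed_compl
    obtain ⟨x, hx⟩ := h
    exact hclHDc (interior_subset hx) hx
  refine ⟨⟨⟨h, hDreg, hDinv⟩, ?_⟩, hcD⟩
  rintro E ⟨hEne, hEreg, hEinv⟩ hED
  have hEopen : IsOpen E := hEreg ▸ isOpen_interior
  rcases dicho E hEinv with hHE | hHEc
  · refine subset_antisymm hED ?_
    have : closure H ⊆ closure E := closure_mono hHE
    calc D ⊆ interior (closure E) := interior_mono this
      _ = E := hEreg.symm
  · exfalso
    have hclHEc : closure H ⊆ Eᶜ := closure_minimal hHEc hEopen.isClosed_compl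
    obtain ⟨x, hx⟩ := hEne
    exact hclHEc (interior_subset (hED hx)) hx
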